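/- Let T be an HC tree of order n produced by some execution of the average link algorithm for a symmetric similarity function w : {1,…,n}×{1,…,n} → ℝ≥0. Then T is locally optimal with respect to the interchange operation. -/
import Mathlib


/-- A (rooted, full) binary tree with leaves labeled by elements of `α`. -/
inductive HCTree (α : Type) : Type
  | leaf : α → HCTree α
  | node : HCTree α → HCTree α → HCTree α
  deriving DecidableEq

namespace HCTree

variable {α : Type} [DecidableEq α]

/-- The set of leaf labels of a tree. -/
def leaves : HCTree α → Finset α
  | leaf a => {a}
  | node l r => leaves l ∪ leaves r

/-- The tree is a valid HC tree: all leaf labels are pairwise distinct. -/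
def Proper : HCTree α → Prop
  | leaf _ => True
  | node l r => Proper l ∧ Proper r ∧ Disjoint (leaves l) (leaves r)

/-- The number of leaves of the subtree rooted at the lowest common ancestor
of the leaves `i` and `j` (i.e. `|T_{i,j}|`). -/
def lcaSize : HCTree α → α → α → ℕ
  | leaf _, _, _ => 1
  | node l r, i, j =>
      if i ∈ leaves l ∧ j ∈ leaves l then lcaSize l i j
      else if i ∈ leaves r ∧ j ∈ leaves r then lcaSize r i j
      else (leaves l ∪ leaves r).card

/-- `Σ_{i<j, i,j ∈ L} w i j`. -/
noncomputable def pairsSum [LinearOrder α] (w : α → α → ℝ) (L : Finset α) : ℝ :=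
  ∑ i ∈ L, ∑ j ∈ L, if i < j then w i j else 0

/-- Moseley–Wang revenue of `T` with respect to its own leaf set:
`rev(T) = Σ_{i<j} w(i,j) (|L| - |T_{i,j}|)`. -/
noncomputable def rev [LinearOrder α] (w : α → α → ℝ) (T : HCTree α) : ℝ :=
  ∑ i ∈ T.leaves, ∑ j ∈ T.leaves,
    if i < j then w i j * ((T.leaves.card : ℝ) - (T.lcaSize i j : ℝ)) else 0

/-- Dasgupta cost: `cost(T) = Σ_{i<j} w(i,j) |T_{i,j}|`. -/
noncomputable def cost [LinearOrder α] (w : α → α → ℝ) (T : HCTree α) : ℝ :=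
  ∑ i ∈ T.leaves, ∑ j ∈ T.leaves,
    if i < j then w i j * (T.lcaSize i j : ℝ) else 0

/-- `w(A,B) = Σ_{i∈A, j∈B} w(i,j)`. -/
noncomputable def wSet (w : α → α → ℝ) (A B : Finset α) : ℝ := ∑ i ∈ A, ∑ j ∈ B, w i j

/-- One-hole contexts for `HCTree`. -/
inductive Ctx (α : Type) : Type
  | hole : Ctx α
  | nodeL : Ctx α → HCTree α → Ctx α
  | nodeR : HCTree α → Ctx α → Ctx α

/-- Filling the hole of a context with a tree. -/
def Ctx.fill {α : Type} : Ctx α → HCTree α → HCTree α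
  | Ctx.hole, T => T
  | Ctx.nodeL K r, T => node (Ctx.fill K T) r
  | Ctx.nodeR l K, T => node l (Ctx.fill K T)

/-- Equality of HC trees as *unordered* trees (children of a node are unordered). -/
inductive TEq : HCTree α → HCTree α → Prop
  | leaf (a : α) : TEq (leaf a) (leaf a)
  | node {l r l' r' : HCTree α} : TEq l l' → TEq r r' → TEq (node l r) (node l' r')
  | swap {l r l' r' : HCTree α} : TEq l r' → TEq r l' → TEq (node l r) (node l' r')

/-- `T'` is obtained from `T` by a single interchange operation: at an edge `(x,y)`
where `x` is internal with parent `y`, the subtrees rooted at the children of `x`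
have leaf sets `A` and `B`, and the other child of `y` has leaf set `C`; the
operation swaps the `B`-subtree with the `C`-subtree, or the `A`-subtree with
the `C`-subtree. -/
def Interchange {α : Type} (T T' : HCTree α) : Prop :=
  ∃ (K : Ctx α) (A B C : HCTree α),
    T = K.fill (node (node A B) C) ∧
    (T' = K.fill (node (node A C) B) ∨ T' = K.fill (node (node C B) A))

/-- `T` is locally optimal: no interchange, performed on any presentation `S` of
`T` as an unordered tree, strictly increases the revenue. -/
def LocalOpt [LinearOrder α] (w : α → α → ℝ) (T : HCTree α) : Prop :=
  ∀ S S' : HCTree α, TEq T S → Interchange S S' → rev w S' ≤ rev w T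

/-- One step of local search: an interchange, up to unordered-tree equality. -/
def IStep (T T' : HCTree α) : Prop :=
  ∃ S S' : HCTree α, TEq T S ∧ Interchange S S' ∧ TEq S' T'

/-- The interchange distance: minimum number of interchange operations needed to
convert `T₁` into `T₂` (as unordered trees). -/
noncomputable def idist (T₁ T₂ : HCTree α) : ℕ :=
  sInf {k : ℕ | ∃ f : ℕ → HCTree α, f 0 = T₁ ∧ TEq (f k) T₂ ∧
    ∀ i < k, IStep (f i) (f (i + 1))}

/-- The total cost of all merges of `T`: the sum over internal nodes, with
children leaf sets `A`, `B`, of `(|A|+|B|)·w(A,B)`. -/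
noncomputable def mergeCostSum (w : α → α → ℝ) : HCTree α → ℝ
  | leaf _ => 0
  | node l r => mergeCostSum w l + mergeCostSum w r
      + ((l.leaves.card : ℝ) + (r.leaves.card : ℝ)) * wSet w l.leaves r.leaves

/-- The total revenue of all merges of `T` in a tree of order `n`: the sum over
internal nodes, with children leaf sets `A`, `B`, of `(n-|A|-|B|)·w(A,B)`. -/
noncomputable def mergeRevSum (w : α → α → ℝ) (n : ℕ) : HCTree α → ℝ
  | leaf _ => 0
  | node l r => mergeRevSum w n l + mergeRevSum w n r
      + ((n : ℝ) - (l.leaves.card : ℝ) - (r.leaves.card : ℝ)) * wSet w l.leaves r.leaves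

/-- Average similarity between two clusters. -/
noncomputable def sim (w : α → α → ℝ) (A B : Finset α) : ℝ :=
  wSet w A B / ((A.card : ℝ) * (B.card : ℝ))

/-- The forests (partial hierarchies) reachable by the average link algorithm:
start from singletons, and repeatedly merge two clusters of maximal average
similarity. -/
inductive AvgLinkForest [Fintype α] (w : α → α → ℝ) : Finset (HCTree α) → Prop
  | init : AvgLinkForest w (Finset.univ.image (leaf : α → HCTree α))
  | merge {F : Finset (HCTree α)} {A B : HCTree α} :
      AvgLinkForest w F → A ∈ F → B ∈ F → A ≠ B →
      (∀ X ∈ F, ∀ Y ∈ F, X ≠ Y → sim w X.leaves Y.leaves ≤ sim w A.leaves B.leaves) →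
      AvgLinkForest w (insert (node A B) ((F.erase A).erase B))

/-- `T` is produced by some execution of the average link algorithm. -/
def AvgLinkTree [Fintype α] (w : α → α → ℝ) (T : HCTree α) : Prop :=
  AvgLinkForest w {T}

end HCTree
namespace HCTree

section Aux

variable {α : Type} [DecidableEq α] {w : α → α → ℝ}
set_option linter.unusedSectionVars false

lemma leaves_nonempty (T : HCTree α) : T.leaves.Nonempty := by
  induction T with
  | leaf a => exact ⟨a, by simp [leaves]⟩
  | node l r ihl ihr =>
      obtain ⟨x, hx⟩ := ihl
      exact ⟨x, Finset.mem_union_left _ hx⟩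

lemma leaves_card_pos (T : HCTree α) : 0 < ((T.leaves.card : ℝ)) := by
  exact_mod_cast Finset.card_pos.mpr (leaves_nonempty T)

lemma wSet_comm (hsym : ∀ i j, w i j = w j i) (A B : Finset α) :
    wSet w A B = wSet w B A := by
  rw [wSet, Finset.sum_comm]
  exact Finset.sum_congr rfl fun i _ => Finset.sum_congr rfl fun j _ => hsym j i

lemma wSet_union_left {A B : Finset α} (hd : Disjoint A B) (C : Finset α) :
    wSet w (A ∪ B) C = wSet w A C + wSet w B C := Finset.sum_union hd

lemma wSet_union_right (A : Finset α) {B C : Finset α} (hd : Disjoint B C) :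
    wSet w A (B ∪ C) = wSet w A B + wSet w A C := by
  rw [wSet, wSet, wSet, ← Finset.sum_add_distrib]
  exact Finset.sum_congr rfl fun i _ => Finset.sum_union hd

lemma sim_comm (hsym : ∀ i j, w i j = w j i) (A B : Finset α) :
    sim w A B = sim w B A := by
  rw [sim, sim, wSet_comm hsym, mul_comm]

lemma sim_union_le {A C₁ C₂ : Finset α} {s : ℝ}
    (hA : 0 < (A.card : ℝ)) (h1 : 0 < (C₁.card : ℝ)) (h2 : 0 < (C₂.card : ℝ))
    (hd : Disjoint C₁ C₂) (e1 : sim w A C₁ ≤ s) (e2 : sim w A C₂ ≤ s) :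
    sim w A (C₁ ∪ C₂) ≤ s := by
  have hu : (0:ℝ) < (((C₁ ∪ C₂).card : ℕ) : ℝ) := by
    rw [Finset.card_union_of_disjoint hd]; push_cast; linarith
  rw [sim, div_le_iff₀ (mul_pos hA h1)] at e1
  rw [sim, div_le_iff₀ (mul_pos hA h2)] at e2
  rw [sim, div_le_iff₀ (mul_pos hA hu), wSet_union_right _ hd,
    Finset.card_union_of_disjoint hd]
  push_cast
  nlinarith

/-- every internal node `node A B` of the tree satisfies
`sim(A,C) ≤ sim(A,B)` and `sim(B,C) ≤ sim(A,B)`. -/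
def GoodVs (w : α → α → ℝ) (C : Finset α) : HCTree α → Prop
  | leaf _ => True
  | node A B => GoodVs w C A ∧ GoodVs w C B ∧
      sim w A.leaves C ≤ sim w A.leaves B.leaves ∧
      sim w B.leaves C ≤ sim w A.leaves B.leaves

def Good (w : α → α → ℝ) : HCTree α → Prop
  | leaf _ => True
  | node l r => Good w l ∧ Good w r ∧ GoodVs w r.leaves l ∧ GoodVs w l.leaves r

lemma goodVs_union {C₁ C₂ : Finset α}
    (h1 : 0 < (C₁.card : ℝ)) (h2 : 0 < (C₂.card : ℝ)) (hd : Disjoint C₁ C₂) :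
    ∀ {U : HCTree α}, GoodVs w C₁ U → GoodVs w C₂ U → GoodVs w (C₁ ∪ C₂) U
  | leaf _, _, _ => trivial
  | node A B, ⟨a1, b1, s1, t1⟩, ⟨a2, b2, s2, t2⟩ =>
      ⟨goodVs_union h1 h2 hd a1 a2, goodVs_union h1 h2 hd b1 b2,
       sim_union_le (leaves_card_pos A) h1 h2 hd s1 s2,
       sim_union_le (leaves_card_pos B) h1 h2 hd t1 t2⟩

lemma TEq.leaves_eq {T S : HCTree α} (h : TEq T S) : T.leaves = S.leaves := by
  induction h with
  | leaf a => rfl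
  | node h1 h2 ih1 ih2 => simp only [leaves, ih1, ih2]
  | swap h1 h2 ih1 ih2 => simp only [leaves, ih1, ih2, Finset.union_comm]

lemma TEq.proper {T S : HCTree α} (h : TEq T S) (hp : Proper T) : Proper S := by
  induction h with
  | leaf a => trivial
  | node h1 h2 ih1 ih2 =>
      obtain ⟨p1, p2, hd⟩ := hp
      exact ⟨ih1 p1, ih2 p2, by rwa [← h1.leaves_eq, ← h2.leaves_eq]⟩
  | swap h1 h2 ih1 ih2 =>
      obtain ⟨p1, p2, hd⟩ := hp
      exact ⟨ih2 p2, ih1 p1, by rw [← h2.leaves_eq, ← h1.leaves_eq]; exact hd.symm⟩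

lemma TEq.goodVs (hsym : ∀ i j, w i j = w j i) {C : Finset α} {T S : HCTree α}
    (h : TEq T S) (hg : GoodVs w C T) : GoodVs w C S := by
  induction h with
  | leaf a => trivial
  | node h1 h2 ih1 ih2 =>
      obtain ⟨g1, g2, s1, s2⟩ := hg
      exact ⟨ih1 g1, ih2 g2, by rwa [← h1.leaves_eq, ← h2.leaves_eq],
        by rwa [← h1.leaves_eq, ← h2.leaves_eq]⟩
  | swap h1 h2 ih1 ih2 =>
      obtain ⟨g1, g2, s1, s2⟩ := hg
      refine ⟨ih2 g2, ih1 g1, ?_, ?_⟩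
      · rw [← h2.leaves_eq, ← h1.leaves_eq, sim_comm hsym (leaves _) (leaves _)]
        exact s2
      · rw [← h2.leaves_eq, ← h1.leaves_eq, sim_comm hsym (leaves _) (leaves _)]
        exact s1

lemma TEq.good (hsym : ∀ i j, w i j = w j i) {T S : HCTree α}
    (h : TEq T S) (hg : Good w T) : Good w S := by
  induction h with
  | leaf a => trivial
  | node h1 h2 ih1 ih2 =>
      obtain ⟨g1, g2, v1, v2⟩ := hg
      exact ⟨ih1 g1, ih2 g2, by rw [← h2.leaves_eq]; exact h1.goodVs hsym v1,
        by rw [← h1.leaves_eq]; exact h2.goodVs hsym v2⟩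
  | swap h1 h2 ih1 ih2 =>
      obtain ⟨g1, g2, v1, v2⟩ := hg
      exact ⟨ih2 g2, ih1 g1, by rw [← h1.leaves_eq]; exact h2.goodVs hsym v2,
        by rw [← h2.leaves_eq]; exact h1.goodVs hsym v1⟩

lemma TEq.mcs (hsym : ∀ i j, w i j = w j i) {T S : HCTree α}
    (h : TEq T S) : mergeCostSum w T = mergeCostSum w S := by
  induction h with
  | leaf a => rfl
  | node h1 h2 ih1 ih2 =>
      simp only [mergeCostSum, ih1, ih2, h1.leaves_eq, h2.leaves_eq]
  | swap h1 h2 ih1 ih2 =>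
      simp only [mergeCostSum, ih1, ih2, h1.leaves_eq, h2.leaves_eq]
      rw [wSet_comm hsym]
      ring

lemma proper_of_fill : ∀ (K : Ctx α) (Y : HCTree α), Proper (K.fill Y) → Proper Y
  | Ctx.hole, _, h => h
  | Ctx.nodeL K r, Y, h => proper_of_fill K Y h.1
  | Ctx.nodeR l K, Y, h => proper_of_fill K Y h.2.1

lemma good_of_fill : ∀ (K : Ctx α) (Y : HCTree α), Good w (K.fill Y) → Good w Y
  | Ctx.hole, _, h => h
  | Ctx.nodeL K r, Y, h => good_of_fill K Y h.1
  | Ctx.nodeR l K, Y, h => good_of_fill K Y h.2.1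

lemma leaves_fill_congr {Y Y' : HCTree α} (hl : Y.leaves = Y'.leaves) :
    ∀ K : Ctx α, (K.fill Y).leaves = (K.fill Y').leaves
  | Ctx.hole => hl
  | Ctx.nodeL K r => by
      simp only [Ctx.fill, leaves, leaves_fill_congr hl K]
  | Ctx.nodeR l K => by
      simp only [Ctx.fill, leaves, leaves_fill_congr hl K]

lemma proper_fill_congr {Y Y' : HCTree α} (hl : Y.leaves = Y'.leaves)
    (hp' : Proper Y') : ∀ K : Ctx α, Proper (K.fill Y) → Proper (K.fill Y')
  | Ctx.hole, _ => hp'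
  | Ctx.nodeL K r, h =>
      ⟨proper_fill_congr hl hp' K h.1, h.2.1, by
        rw [← leaves_fill_congr hl K]; exact h.2.2⟩
  | Ctx.nodeR l K, h =>
      ⟨h.1, proper_fill_congr hl hp' K h.2.1, by
        rw [← leaves_fill_congr hl K]; exact h.2.2⟩

lemma mcs_fill_congr {Y Y' : HCTree α} (hl : Y.leaves = Y'.leaves) :
    ∀ K : Ctx α, mergeCostSum w (K.fill Y') + mergeCostSum w Y
      = mergeCostSum w (K.fill Y) + mergeCostSum w Y'
  | Ctx.hole => by simp only [Ctx.fill]; ring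
  | Ctx.nodeL K r => by
      have := mcs_fill_congr hl K
      simp only [Ctx.fill, mergeCostSum, ← leaves_fill_congr hl K]
      linarith
  | Ctx.nodeR l K => by
      have := mcs_fill_congr hl K
      simp only [Ctx.fill, mergeCostSum, ← leaves_fill_congr hl K]
      linarith

section CostSec
variable [LinearOrder α]

lemma cross_sum (hsym : ∀ i j, w i j = w j i) {L R : Finset α} (hd : Disjoint L R) :
    ((∑ i ∈ L, ∑ j ∈ R, if i < j then w i j else 0)
      + ∑ i ∈ R, ∑ j ∈ L, if i < j then w i j else 0) = wSet w L R := by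
  rw [show (∑ i ∈ R, ∑ j ∈ L, if i < j then w i j else 0)
      = ∑ i ∈ L, ∑ j ∈ R, if j < i then w j i else 0 from Finset.sum_comm]
  rw [wSet, ← Finset.sum_add_distrib]
  refine Finset.sum_congr rfl fun i hi => ?_
  rw [← Finset.sum_add_distrib]
  refine Finset.sum_congr rfl fun j hj => ?_
  have hne : i ≠ j := fun h => Finset.disjoint_left.mp hd hi (h ▸ hj)
  rcases hne.lt_or_gt with h | h
  · rw [if_pos h, if_neg (asymm h), add_zero]
  · rw [if_neg (asymm h), if_pos h, zero_add]
    exact hsym j i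

lemma cost_node (hsym : ∀ i j, w i j = w j i) {l r : HCTree α}
    (hd : Disjoint l.leaves r.leaves) :
    cost w (node l r) = cost w l + cost w r
      + ((l.leaves.card : ℝ) + (r.leaves.card : ℝ)) * wSet w l.leaves r.leaves := by
  have e1 : (∑ i ∈ l.leaves, ∑ j ∈ l.leaves,
      if i < j then w i j * (((node l r).lcaSize i j : ℕ) : ℝ) else 0) = cost w l := by
    refine Finset.sum_congr rfl fun i hi => Finset.sum_congr rfl fun j hj => ?_
    have h : (node l r).lcaSize i j = l.lcaSize i j := by simp [lcaSize, hi, hj]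
    rw [h]
  have e2 : (∑ i ∈ r.leaves, ∑ j ∈ r.leaves,
      if i < j then w i j * (((node l r).lcaSize i j : ℕ) : ℝ) else 0) = cost w r := by
    refine Finset.sum_congr rfl fun i hi => Finset.sum_congr rfl fun j hj => ?_
    have hi' : i ∉ l.leaves := Finset.disjoint_right.mp hd hi
    have h : (node l r).lcaSize i j = r.lcaSize i j := by simp [lcaSize, hi', hi, hj]
    rw [h]
  have e3 : ∀ i ∈ l.leaves, ∀ j ∈ r.leaves,
      (if i < j then w i j * (((node l r).lcaSize i j : ℕ) : ℝ) else 0)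
      = (if i < j then w i j else 0) * (((l.leaves ∪ r.leaves).card : ℕ) : ℝ) := by
    intro i hi j hj
    have hi' : i ∉ r.leaves := Finset.disjoint_left.mp hd hi
    have hj' : j ∉ l.leaves := Finset.disjoint_right.mp hd hj
    have h : (node l r).lcaSize i j = (l.leaves ∪ r.leaves).card := by
      simp [lcaSize, hi', hj']
    rw [h, ite_mul, zero_mul]
  have e3' : ∀ i ∈ r.leaves, ∀ j ∈ l.leaves,
      (if i < j then w i j * (((node l r).lcaSize i j : ℕ) : ℝ) else 0)
      = (if i < j then w i j else 0) * (((l.leaves ∪ r.leaves).card : ℕ) : ℝ) := by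
    intro i hi j hj
    have hi' : i ∉ l.leaves := Finset.disjoint_right.mp hd hi
    have hj' : j ∉ r.leaves := Finset.disjoint_left.mp hd hj
    have h : (node l r).lcaSize i j = (l.leaves ∪ r.leaves).card := by
      simp [lcaSize, hi', hj']
    rw [h, ite_mul, zero_mul]
  have hm : (((l.leaves ∪ r.leaves).card : ℕ) : ℝ)
      = (l.leaves.card : ℝ) + (r.leaves.card : ℝ) := by
    rw [Finset.card_union_of_disjoint hd]; push_cast; ring
  have expand : cost w (node l r)
      = (∑ i ∈ l.leaves, ∑ j ∈ l.leaves,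
          if i < j then w i j * (((node l r).lcaSize i j : ℕ) : ℝ) else 0)
      + (∑ i ∈ l.leaves, ∑ j ∈ r.leaves,
          if i < j then w i j * (((node l r).lcaSize i j : ℕ) : ℝ) else 0)
      + ((∑ i ∈ r.leaves, ∑ j ∈ l.leaves,
          if i < j then w i j * (((node l r).lcaSize i j : ℕ) : ℝ) else 0)
      + (∑ i ∈ r.leaves, ∑ j ∈ r.leaves,
          if i < j then w i j * (((node l r).lcaSize i j : ℕ) : ℝ) else 0)) := by
    rw [cost]
    show (∑ i ∈ l.leaves ∪ r.leaves, ∑ j ∈ l.leaves ∪ r.leaves,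
        if i < j then w i j * (((node l r).lcaSize i j : ℕ) : ℝ) else 0) = _
    rw [Finset.sum_union hd]
    simp only [Finset.sum_union hd, Finset.sum_add_distrib]
  rw [expand, e1, e2, Finset.sum_congr rfl (fun i hi => Finset.sum_congr rfl (e3 i hi)),
    Finset.sum_congr rfl (fun i hi => Finset.sum_congr rfl (e3' i hi))]
  simp only [← Finset.sum_mul]
  rw [← cross_sum hsym hd, hm]
  ring

lemma pairsSum_union (hsym : ∀ i j, w i j = w j i) {L R : Finset α} (hd : Disjoint L R) :
    pairsSum w (L ∪ R) = pairsSum w L + pairsSum w R + wSet w L R := by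
  rw [pairsSum, Finset.sum_union hd]
  simp only [Finset.sum_union hd, Finset.sum_add_distrib]
  rw [← cross_sum hsym hd, pairsSum, pairsSum]
  ring

lemma cost_eq_mcs (hsym : ∀ i j, w i j = w j i) :
    ∀ {T : HCTree α}, Proper T → cost w T = mergeCostSum w T
  | leaf a, _ => by simp [cost, leaves, mergeCostSum]
  | node l r, ⟨p1, p2, hd⟩ => by
      rw [cost_node hsym hd, cost_eq_mcs hsym p1, cost_eq_mcs hsym p2]
      rfl

lemma rev_eq (w : α → α → ℝ) (T : HCTree α) :
    rev w T = (T.leaves.card : ℝ) * pairsSum w T.leaves - cost w T := by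
  rw [rev, cost, pairsSum, Finset.mul_sum, ← Finset.sum_sub_distrib]
  refine Finset.sum_congr rfl fun i _ => ?_
  rw [Finset.mul_sum, ← Finset.sum_sub_distrib]
  refine Finset.sum_congr rfl fun j _ => ?_
  split_ifs <;> ring

end CostSec

section Main
variable [LinearOrder α]

lemma rev_interchange (hsym : ∀ i j, w i j = w j i) {S S' : HCTree α}
    (hp : Proper S) (hg : Good w S) (h : Interchange S S') : rev w S' ≤ rev w S := by
  obtain ⟨K, A, B, C, hS, hS'⟩ := h
  subst hS
  obtain ⟨⟨pA, pB, dAB⟩, pC, dABC⟩ := proper_of_fill K _ hp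
  obtain ⟨⟨gA, gB, _, _⟩, gC, hvs, _⟩ := good_of_fill K _ hg
  obtain ⟨_, _, h1, h2⟩ := hvs
  simp only [leaves] at dABC
  have dAC : Disjoint A.leaves C.leaves := (Finset.disjoint_union_left.mp dABC).1
  have dBC : Disjoint B.leaves C.leaves := (Finset.disjoint_union_left.mp dABC).2
  have ha := leaves_card_pos A
  have hb := leaves_card_pos B
  have hc := leaves_card_pos C
  have eY : mergeCostSum w (node (node A B) C)
      = mergeCostSum w A + mergeCostSum w B + mergeCostSum w C
        + ((A.leaves.card : ℝ) + (B.leaves.card : ℝ)) * wSet w A.leaves B.leaves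
        + ((A.leaves.card : ℝ) + (B.leaves.card : ℝ) + (C.leaves.card : ℝ))
          * (wSet w A.leaves C.leaves + wSet w B.leaves C.leaves) := by
    simp only [mergeCostSum, leaves]
    rw [wSet_union_left dAB C.leaves, Finset.card_union_of_disjoint dAB]
    push_cast
    ring
  rcases hS' with hS' | hS'
  · subst hS'
    have hl : (node (node A B) C).leaves = (node (node A C) B).leaves := by
      simp only [leaves]
      rw [Finset.union_right_comm]
    have hp' : Proper (Ctx.fill K (node (node A C) B)) := by
      refine proper_fill_congr hl ⟨⟨pA, pC, dAC⟩, pB, ?_⟩ K hp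
      simp only [leaves]
      exact Finset.disjoint_union_left.mpr ⟨dAB, dBC.symm⟩
    have eY' : mergeCostSum w (node (node A C) B)
        = mergeCostSum w A + mergeCostSum w C + mergeCostSum w B
          + ((A.leaves.card : ℝ) + (C.leaves.card : ℝ)) * wSet w A.leaves C.leaves
          + ((A.leaves.card : ℝ) + (C.leaves.card : ℝ) + (B.leaves.card : ℝ))
            * (wSet w A.leaves B.leaves + wSet w B.leaves C.leaves) := by
      simp only [mergeCostSum, leaves]
      rw [wSet_union_left dAC B.leaves, Finset.card_union_of_disjoint dAC,
        wSet_comm hsym C.leaves B.leaves]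
      push_cast
      ring
    have key : (B.leaves.card : ℝ) * wSet w A.leaves C.leaves
        ≤ (C.leaves.card : ℝ) * wSet w A.leaves B.leaves := by
      rw [sim, sim, div_le_div_iff₀ (mul_pos ha hc) (mul_pos ha hb)] at h1
      nlinarith [h1, ha]
    have hmc := mcs_fill_congr (w := w) hl K
    rw [eY, eY'] at hmc
    rw [rev_eq, rev_eq, (leaves_fill_congr hl K : _)]
    have hcost : cost w (Ctx.fill K (node (node A B) C))
        ≤ cost w (Ctx.fill K (node (node A C) B)) := by
      rw [cost_eq_mcs hsym hp, cost_eq_mcs hsym hp']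
      nlinarith [hmc, key]
    linarith
  · subst hS'
    have hl : (node (node A B) C).leaves = (node (node C B) A).leaves := by
      simp only [leaves]
      ext x
      simp only [Finset.mem_union]
      tauto
    have hp' : Proper (Ctx.fill K (node (node C B) A)) := by
      refine proper_fill_congr hl ⟨⟨pC, pB, dBC.symm⟩, pA, ?_⟩ K hp
      simp only [leaves]
      exact Finset.disjoint_union_left.mpr ⟨dAC.symm, dAB.symm⟩
    have eY' : mergeCostSum w (node (node C B) A)
        = mergeCostSum w C + mergeCostSum w B + mergeCostSum w A
          + ((C.leaves.card : ℝ) + (B.leaves.card : ℝ)) * wSet w B.leaves C.leaves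
          + ((C.leaves.card : ℝ) + (B.leaves.card : ℝ) + (A.leaves.card : ℝ))
            * (wSet w A.leaves C.leaves + wSet w A.leaves B.leaves) := by
      simp only [mergeCostSum, leaves]
      rw [wSet_union_left dBC.symm A.leaves, Finset.card_union_of_disjoint dBC.symm,
        wSet_comm hsym C.leaves B.leaves, wSet_comm hsym C.leaves A.leaves,
        wSet_comm hsym B.leaves A.leaves]
      push_cast
      ring
    have key : (A.leaves.card : ℝ) * wSet w B.leaves C.leaves
        ≤ (C.leaves.card : ℝ) * wSet w A.leaves B.leaves := by
      rw [sim, sim, div_le_div_iff₀ (mul_pos hb hc) (mul_pos ha hb)] at h2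
      nlinarith [h2, hb]
    have hmc := mcs_fill_congr (w := w) hl K
    rw [eY, eY'] at hmc
    rw [rev_eq, rev_eq, (leaves_fill_congr hl K : _)]
    have hcost : cost w (Ctx.fill K (node (node A B) C))
        ≤ cost w (Ctx.fill K (node (node C B) A)) := by
      rw [cost_eq_mcs hsym hp, cost_eq_mcs hsym hp']
      nlinarith [hmc, key]
    linarith

end Main

lemma forest_inv [Fintype α] {F : Finset (HCTree α)} (h : AvgLinkForest w F) :
    ∀ U ∈ F, (Proper U ∧ Good w U) ∧
      ∀ V ∈ F, U ≠ V → Disjoint U.leaves V.leaves ∧ GoodVs w V.leaves U := by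
  induction h with
  | init =>
      intro U hU
      obtain ⟨a, _, rfl⟩ := Finset.mem_image.mp hU
      refine ⟨⟨trivial, trivial⟩, ?_⟩
      intro V hV hne
      obtain ⟨b, _, rfl⟩ := Finset.mem_image.mp hV
      have hab : a ≠ b := fun h => hne (by rw [h])
      exact ⟨by simp [leaves, hab, hab.symm], trivial⟩
  | @merge F A B hF hA hB hAB hmax ih =>
      intro U hU
      have memS : ∀ {X : HCTree α}, X ∈ (F.erase A).erase B → X ∈ F ∧ X ≠ A ∧ X ≠ B := by
        intro X hX
        have hX' := Finset.mem_erase.mp hX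
        have hX'' := Finset.mem_erase.mp hX'.2
        exact ⟨hX''.2, hX''.1, hX'.1⟩
      have dABl : Disjoint A.leaves B.leaves := ((ih A hA).2 B hB hAB).1
      have hand : Proper (node A B) ∧ Good w (node A B) :=
        ⟨⟨(ih A hA).1.1, (ih B hB).1.1, dABl⟩,
         (ih A hA).1.2, (ih B hB).1.2, ((ih A hA).2 B hB hAB).2,
         ((ih B hB).2 A hA hAB.symm).2⟩
      rcases Finset.mem_insert.mp hU with rfl | hU'
      · refine ⟨hand, ?_⟩
        intro V hV hne
        rcases Finset.mem_insert.mp hV with rfl | hV'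
        · exact absurd rfl hne
        · obtain ⟨hVF, hVA, hVB⟩ := memS hV'
          constructor
          · show Disjoint (node A B).leaves V.leaves
            simp only [leaves]
            exact Finset.disjoint_union_left.mpr
              ⟨((ih A hA).2 V hVF (Ne.symm hVA)).1, ((ih B hB).2 V hVF (Ne.symm hVB)).1⟩
          · exact ⟨((ih A hA).2 V hVF (Ne.symm hVA)).2, ((ih B hB).2 V hVF (Ne.symm hVB)).2,
              hmax A hA V hVF (Ne.symm hVA), hmax B hB V hVF (Ne.symm hVB)⟩
      · obtain ⟨hUF, hUA, hUB⟩ := memS hU'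
        refine ⟨(ih U hUF).1, ?_⟩
        intro V hV hne
        rcases Finset.mem_insert.mp hV with rfl | hV'
        · constructor
          · show Disjoint U.leaves (node A B).leaves
            simp only [leaves]
            exact Finset.disjoint_union_right.mpr
              ⟨((ih U hUF).2 A hA hUA).1, ((ih U hUF).2 B hB hUB).1⟩
          · show GoodVs w (node A B).leaves U
            simp only [leaves]
            exact goodVs_union (leaves_card_pos A) (leaves_card_pos B) dABl
              ((ih U hUF).2 A hA hUA).2 ((ih U hUF).2 B hB hUB).2
        · obtain ⟨hVF, _, _⟩ := memS hV'
          exact (ih U hUF).2 V hVF hne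

end Aux
end HCTree

open HCTree in
/-- any average-link tree is locally optimal with respect to the
interchange operation. -/
theorem average_link_locally_optimal {n : ℕ} (w : Fin n → Fin n → ℝ)
    (hsym : ∀ i j, w i j = w j i) (hnonneg : ∀ i j, 0 ≤ w i j)
    (T : HCTree (Fin n)) (hT : AvgLinkTree w T) :
    T.LocalOpt w := by
  intro S S' hTS hint
  have hTm : T ∈ ({T} : Finset (HCTree (Fin n))) := Finset.mem_singleton_self T
  have hp := (forest_inv hT T hTm).1.1
  have hg := (forest_inv hT T hTm).1.2
  have hpS := hTS.proper hp
  have hgS := hTS.good hsym hg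
  have h1 : rev w S' ≤ rev w S := rev_interchange hsym hpS hgS hint
  have h2 : rev w S = rev w T := by
    rw [rev_eq, rev_eq, ← hTS.leaves_eq, cost_eq_mcs hsym hpS, cost_eq_mcs hsym hp,
      ← TEq.mcs hsym hTS]
  linarith
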